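/- Let 𝒯 be a JdLG-admissible semigroup of bounded linear operators on a complex Banach space E. If inf_{T ∈ 𝒯} ‖T y‖ > 0 for every y ≠ 0 such that the orbit 𝒯y is relatively compact in the norm topology of E, then E_r = {ξ ∈ E : 𝒯ξ is relatively compact in the norm topology of E}. -/

import Mathlib

open Filter Topology Set MeasureTheory BoundedContinuousFunction

noncomputable section

namespace JdLG

section Operators

variable (E : Type*) [NormedAddCommGroup E] [NormedSpace ℂ E]

/-- The closure of a set of bounded operators in the weak operator topology. -/
def wotClosure (T : Set (E →L[ℂ] E)) : Set (E →L[ℂ] E) :=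
  (ContinuousLinearMapWOT.ofCLM : (E →L[ℂ] E) → (E →WOT[ℂ] E)) ⁻¹' closure ((ContinuousLinearMapWOT.ofCLM : (E →L[ℂ] E) → (E →WOT[ℂ] E)) '' T)

/-- A set of bounded operators is relatively weakly compact if it is relatively compact in
the weak operator topology. -/
def RelWeaklyCompact (T : Set (E →L[ℂ] E)) : Prop :=
  IsCompact (closure ((ContinuousLinearMapWOT.ofCLM : (E →L[ℂ] E) → (E →WOT[ℂ] E)) '' T))

/-- The reversible part `E_r` of `E` for a set of operators `T`, defined through the weak
operator closure `𝒮` of `T`. -/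
def rev (T : Set (E →L[ℂ] E)) : Set E :=
  {ξ | ∀ u ∈ wotClosure E T, ∃ v ∈ wotClosure E T, v (u ξ) = ξ}

/-- The almost weakly stable part `E_aws` of `E` for a set of operators `T`. -/
def aws (T : Set (E →L[ℂ] E)) : Set E :=
  {ξ | ∃ u ∈ wotClosure E T, u ξ = 0}

/-- A semigroup of operators is JdLG-admissible if it is relatively weakly compact and
`E` decomposes as the direct sum `E = E_r ⊕ E_aws`: every vector is uniquely the sum of a
reversible vector and an almost weakly stable vector. -/
def Admissible (T : Set (E →L[ℂ] E)) : Prop :=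
  RelWeaklyCompact E T ∧
    ∀ ξ : E, ∃! q : E × E, q.1 ∈ rev E T ∧ q.2 ∈ aws E T ∧ q.1 + q.2 = ξ

variable {S : Type*}

/-- A representation of a (semitopological) semigroup `S` on `E`: a homomorphism into the
bounded operators on `E` which is continuous into the weak operator topology. -/
def IsRepresentation [Mul S] [TopologicalSpace S] (π : S → E →L[ℂ] E) : Prop :=
  (∀ s t : S, π (s * t) = (π s).comp (π t)) ∧
    Continuous fun s => ContinuousLinearMapWOT.ofCLM (π s : E →L[ℂ] E)

end Operators

end JdLG

namespace JP
variable {E : Type*} [NormedAddCommGroup E] [NormedSpace ℂ E]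

abbrev jj (E : Type*) [NormedAddCommGroup E] [NormedSpace ℂ E] :
    (E →L[ℂ] E) ≃ₗ[ℂ] (E →WOT[ℂ] E) := (ContinuousLinearMapWOT.linearEquiv ℂ).symm

instance : Mul (E →WOT[ℂ] E) :=
  ⟨fun A B => jj E (((jj E).symm A).comp ((jj E).symm B))⟩

lemma mul_def (A B : E →WOT[ℂ] E) :
    A * B = jj E (((jj E).symm A).comp ((jj E).symm B)) := rfl

@[simp] lemma symm_mul (A B : E →WOT[ℂ] E) :
    (jj E).symm (A * B) = ((jj E).symm A).comp ((jj E).symm B) := by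
  rw [mul_def]; exact (jj E).symm_apply_apply _

lemma mul_apply (A B : E →WOT[ℂ] E) (x : E) : (A * B) x = A (B x) := by
  show ((jj E).symm (A * B)) x = _
  rw [symm_mul]; rfl

instance : Semigroup (E →WOT[ℂ] E) where
  mul_assoc A B C := by
    apply ContinuousLinearMapWOT.ext
    intro x
    simp [mul_apply]

lemma continuous_mul_right' (B : E →WOT[ℂ] E) : Continuous (· * B) := by
  apply ContinuousLinearMapWOT.continuous_of_dual_apply_continuous
  intro x y
  have : ∀ A : E →WOT[ℂ] E, (A * B) x = A (B x) := fun A => mul_apply A B x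
  simp only [this]
  exact ContinuousLinearMapWOT.continuous_dual_apply (B x) y

lemma continuous_mul_left' (A : E →WOT[ℂ] E) : Continuous (A * ·) := by
  apply ContinuousLinearMapWOT.continuous_of_dual_apply_continuous
  intro x y
  have h : ∀ B : E →WOT[ℂ] E, y ((A * B) x) = (y.comp ((jj E).symm A)) (B x) := by
    intro B; rw [mul_apply]; rfl
  simp only [h]
  exact ContinuousLinearMapWOT.continuous_dual_apply x _

lemma jj_apply (u : E →L[ℂ] E) (x : E) : (jj E u) x = u x := rfl

lemma jj_mul (u v : E →L[ℂ] E) : jj E (u.comp v) = jj E u * jj E v := by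
  rw [mul_def]; simp

/-- a set closed under `*` has closure closed under `*`. -/
lemma closure_mul_mem {S : Set (E →WOT[ℂ] E)}
    (hS : ∀ a ∈ S, ∀ b ∈ S, a * b ∈ S) :
    ∀ a ∈ closure S, ∀ b ∈ closure S, a * b ∈ closure S := by
  have step1 : ∀ a ∈ S, ∀ b ∈ closure S, a * b ∈ closure S := by
    intro a ha b hb
    have h1 : (a * ·) '' closure S ⊆ closure ((a * ·) '' S) :=
      image_closure_subset_closure_image (continuous_mul_left' a)
    have h2 : (a * ·) '' S ⊆ S := by
      rintro _ ⟨c, hc, rfl⟩; exact hS a ha c hc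
    exact (closure_mono h2) (h1 ⟨b, hb, rfl⟩)
  intro a ha b hb
  have h1 : (· * b) '' closure S ⊆ closure ((· * b) '' S) :=
    image_closure_subset_closure_image (continuous_mul_right' b)
  have h2 : (· * b) '' S ⊆ closure S := by
    rintro _ ⟨c, hc, rfl⟩; exact step1 c hc b hb
  have := (closure_mono h2) (h1 ⟨a, ha, rfl⟩)
  rwa [closure_closure] at this

section Bound
variable [CompleteSpace E]

/-- A WOT-compact set of operators is norm bounded. -/
lemma norm_bound {S : Set (E →WOT[ℂ] E)} (hS : IsCompact S) :
    ∃ M : ℝ, 1 ≤ M ∧ ∀ A ∈ S, ‖(jj E).symm A‖ ≤ M := by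
  rcases S.eq_empty_or_nonempty with rfl | hne
  · exact ⟨1, le_refl _, by simp⟩
  have hpt : ∀ x : E, ∃ C : ℝ, ∀ A : S, ‖((jj E).symm A.1) x‖ ≤ C := by
    intro x
    have hbd : ∀ φ : StrongDual ℂ E, ∃ C : ℝ, ∀ A : S,
        ‖(NormedSpace.inclusionInDoubleDual ℂ E (((jj E).symm A.1) x)) φ‖ ≤ C := by
      intro φ
      have hc : Continuous fun A : E →WOT[ℂ] E => φ (A x) :=
        ContinuousLinearMapWOT.continuous_dual_apply x φ
      have : IsCompact ((fun A : E →WOT[ℂ] E => φ (A x)) '' S) := hS.image hc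
      rcases this.isBounded.exists_norm_le with ⟨C, hC⟩
      refine ⟨C, fun A => ?_⟩
      have : φ (A.1 x) ∈ (fun A : E →WOT[ℂ] E => φ (A x)) '' S := ⟨A.1, A.2, rfl⟩
      simpa using hC _ this
    haveI : Nonempty S := hne.to_subtype
    obtain ⟨C, hC⟩ := banach_steinhaus (fun φ => hbd φ)
    refine ⟨C, fun A => ?_⟩
    have := hC A
    calc ‖((jj E).symm A.1) x‖
        = ‖NormedSpace.inclusionInDoubleDual ℂ E (((jj E).symm A.1) x)‖ :=
          ((NormedSpace.inclusionInDoubleDualLi ℂ).norm_map _).symm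
      _ ≤ C := this
  haveI : Nonempty S := hne.to_subtype
  obtain ⟨M, hM⟩ := banach_steinhaus (g := fun A : S => (jj E).symm A.1) hpt
  refine ⟨max M 1, le_max_right _ _, fun A hA => le_trans (hM ⟨A, hA⟩) (le_max_left _ _)⟩

end Bound

/-- If `y` has relatively norm-compact `T`-orbit, then any WOT-limit point of (the image of) `T`
maps `y` into the orbit closure. -/
lemma apply_mem_orbit_closure {T : Set (E →L[ℂ] E)} {A : E →WOT[ℂ] E}
    (hA : A ∈ closure ((jj E) '' T)) {y : E}
    (hK : IsCompact (closure ((fun u : E →L[ℂ] E => u y) '' T))) :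
    A y ∈ closure ((fun u : E →L[ℂ] E => u y) '' T) := by
  set K := closure ((fun u : E →L[ℂ] E => u y) '' T) with hKdef
  rcases mem_closure_iff_ultrafilter.mp hA with ⟨U, hUT, hUA⟩
  set V : Ultrafilter E := U.map (fun B : E →WOT[ℂ] E => B y) with hV
  have hVK : K ∈ V := by
    refine Ultrafilter.mem_map.mpr (mem_of_superset hUT ?_)
    rintro _ ⟨t, ht, rfl⟩
    exact subset_closure ⟨t, ht, rfl⟩
  obtain ⟨z, hzK, hVz⟩ := hK.ultrafilter_le_nhds V (le_principal_iff.mpr hVK)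
  have hphi : ∀ φ : StrongDual ℂ E, φ (A y) = φ z := by
    intro φ
    have h1 : Tendsto (fun B : E →WOT[ℂ] E => φ (B y)) U (𝓝 (φ (A y))) :=
      ((ContinuousLinearMapWOT.continuous_dual_apply y φ).tendsto A).comp hUA
    have h2 : Tendsto (fun B : E →WOT[ℂ] E => φ (B y)) U (𝓝 (φ z)) :=
      (φ.continuous.tendsto z).comp hVz
    exact tendsto_nhds_unique h1 h2
  have : A y = z := (NormedSpace.eq_iff_forall_dual_eq ℂ).mpr hphi
  rwa [this]

/-- Greedy construction of a separated sequence in a non-totally-bounded set. -/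
lemma exists_separated_seq {S : Set E} (h : ¬ TotallyBounded S) :
    ∃ ε : ℝ, 0 < ε ∧ ∃ x : ℕ → E, (∀ n, x n ∈ S) ∧
      ∀ m n : ℕ, m ≠ n → ε ≤ ‖x m - x n‖ := by
  classical
  rw [Metric.totallyBounded_iff] at h
  push_neg at h
  obtain ⟨ε, hε, hcov⟩ := h
  have key : ∀ F : Finset E, ∃ y ∈ S, ∀ z ∈ F, ε ≤ dist y z := by
    intro F
    have := hcov F F.finite_toSet
    rw [Set.not_subset] at this
    obtain ⟨y, hyS, hy⟩ := this
    refine ⟨y, hyS, fun z hz => ?_⟩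
    by_contra hlt
    push_neg at hlt
    exact hy (Set.mem_iUnion₂.mpr ⟨z, hz, Metric.mem_ball.mpr hlt⟩)
  choose f hfS hfd using key
  -- accumulate finsets
  let g : ℕ → Finset E := fun n => Nat.rec (∅ : Finset E) (fun _ Fn => insert (f Fn) Fn) n
  have hgsucc : ∀ n, g (n + 1) = insert (f (g n)) (g n) := fun n => rfl
  have hmono : ∀ m n, m ≤ n → g m ⊆ g n := by
    intro m n hmn
    induction n with
    | zero => simp_all
    | succ k ih =>
      rcases Nat.lt_or_ge m (k+1) with hk | hk
      · intro a ha
        rw [hgsucc]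
        exact Finset.mem_insert_of_mem (ih (Nat.lt_succ_iff.mp hk) ha)
      · have : m = k + 1 := le_antisymm hmn hk
        subst this; exact fun a ha => ha
  set x : ℕ → E := fun n => f (g n) with hx
  have hmem : ∀ m n, m < n → x m ∈ g n := by
    intro m n hmn
    have : x m ∈ g (m+1) := by rw [hgsucc]; exact Finset.mem_insert_self _ _
    exact hmono (m+1) n hmn this
  refine ⟨ε, hε, x, fun n => hfS _, fun m n hmn => ?_⟩
  rcases Ne.lt_or_gt hmn with h | h
  · have := hfd (g n) (x m) (hmem m n h)
    rwa [dist_eq_norm, norm_sub_rev] at this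
  · have := hfd (g m) (x n) (hmem n m h)
    rwa [dist_eq_norm] at this


section Ideal

variable {S : Set (E →WOT[ℂ] E)}

/-- Existence of a minimal closed left ideal in a compact closed semigroup. -/
lemma exists_minimal_left_ideal (hcomp : IsCompact S) (hclosed : IsClosed S) (hne : S.Nonempty)
    (hmul : ∀ a ∈ S, ∀ b ∈ S, a * b ∈ S) :
    ∃ L, L ⊆ S ∧ L.Nonempty ∧ IsClosed L ∧ (∀ a ∈ S, ∀ b ∈ L, a * b ∈ L) ∧
      ∀ L', L' ⊆ L → L'.Nonempty → IsClosed L' → (∀ a ∈ S, ∀ b ∈ L', a * b ∈ L') → L' = L := by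
  set Idl : Set (Set (E →WOT[ℂ] E)) :=
    {L | L ⊆ S ∧ L.Nonempty ∧ IsClosed L ∧ ∀ a ∈ S, ∀ b ∈ L, a * b ∈ L} with hIdl
  have hSIdl : S ∈ Idl := ⟨subset_rfl, hne, hclosed, hmul⟩
  have hzorn : ∀ c ⊆ Idl, IsChain (· ⊆ ·) c → c.Nonempty →
      ∃ lb ∈ Idl, ∀ s ∈ c, lb ⊆ s := by
    intro c hcIdl hchain hcne
    haveI : Nonempty c := hcne.to_subtype
    have h1 : (⋂ L : c, (L : Set (E →WOT[ℂ] E))).Nonempty := by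
      apply IsCompact.nonempty_iInter_of_directed_nonempty_isCompact_isClosed
      · intro i j
        rcases hchain.total i.2 j.2 with h | h
        · exact ⟨i, subset_rfl, h⟩
        · exact ⟨j, h, subset_rfl⟩
      · exact fun i => (hcIdl i.2).2.1
      · exact fun i => hcomp.of_isClosed_subset (hcIdl i.2).2.2.1 (hcIdl i.2).1
      · exact fun i => (hcIdl i.2).2.2.1
    refine ⟨⋂ L : c, (L : Set (E →WOT[ℂ] E)), ⟨?_, h1, ?_, ?_⟩, ?_⟩
    · obtain ⟨L₀⟩ := (inferInstance : Nonempty c)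
      exact (Set.iInter_subset _ L₀).trans (hcIdl L₀.2).1
    · exact isClosed_iInter fun i => (hcIdl i.2).2.2.1
    · intro a ha b hb
      exact Set.mem_iInter.mpr fun i => (hcIdl i.2).2.2.2 a ha b (Set.mem_iInter.mp hb i)
    · intro s hs
      exact Set.iInter_subset_of_subset ⟨s, hs⟩ subset_rfl
  obtain ⟨L, -, hmin⟩ := zorn_superset_nonempty Idl hzorn S hSIdl
  obtain ⟨hLS, hLne, hLcl, hLid⟩ := hmin.prop
  exact ⟨L, hLS, hLne, hLcl, hLid, fun L' hsub hne' hcl' hid' =>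
    hmin.eq_of_subset ⟨hsub.trans hLS, hne', hcl', hid'⟩ hsub⟩

/-- Packaged structure: a minimal idempotent `P` and the group `G = P S P`. -/
lemma exists_P_and_G (hcomp : IsCompact S) (hclosed : IsClosed S) (hne : S.Nonempty)
    (hmul : ∀ a ∈ S, ∀ b ∈ S, a * b ∈ S) :
    ∃ P ∈ S, P * P = P ∧
      (∀ u ∈ S, P * u * P ∈ S) ∧
      (∀ u ∈ S, ∃ q ∈ S, q * P = q ∧ P * q = q ∧
        q * (P * u * P) = P ∧ (P * u * P) * q = P) := by
  obtain ⟨L, hLS, hLne, hLcl, hLid, hLmin⟩ :=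
    exists_minimal_left_ideal hcomp hclosed hne hmul
  have hLcomp : IsCompact L := hcomp.of_isClosed_subset hLcl hLS
  -- idempotent in L
  obtain ⟨P, hPL, hPP⟩ := exists_idempotent_in_compact_subsemigroup
    (fun r => continuous_mul_right' r) L hLne hLcomp
    (fun a ha b hb => hLid a (hLS ha) b hb)
  have hPS : P ∈ S := hLS hPL
  -- G := P S P facts
  have hGmemS : ∀ u ∈ S, P * u * P ∈ S := fun u hu =>
    hmul _ (hmul _ hPS _ hu) _ hPS
  have hGL : ∀ u ∈ S, P * u * P ∈ L := fun u hu =>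
    hLid _ (hmul _ hPS _ hu) _ hPL
  -- (· * u) '' L = L for u ∈ L
  have hLu : ∀ u ∈ L, (· * u) '' L = L := by
    intro u hu
    apply hLmin
    · rintro _ ⟨b, hb, rfl⟩
      exact hLid b (hLS hb) u hu
    · exact ⟨P * u, ⟨P, hPL, rfl⟩⟩
    · exact (hLcomp.image (continuous_mul_right' u)).isClosed
    · rintro a ha _ ⟨b, hb, rfl⟩
      exact ⟨a * b, hLid a ha b hb, (mul_assoc a b u)⟩
  -- left inverses in G
  have hleft : ∀ g, (∃ u ∈ S, g = P * u * P) → ∃ q, (∃ w ∈ S, q = P * w * P) ∧ q * g = P := by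
    rintro g ⟨u, huS, rfl⟩
    have hgL : P * u * P ∈ L := hGL u huS
    have : P ∈ (· * (P * u * P)) '' L := by rw [hLu _ hgL]; exact hPL
    obtain ⟨w, hwL, hw⟩ := this
    refine ⟨P * w * P, ⟨w, hLS hwL, rfl⟩, ?_⟩
    -- (P*w*P) * (P*u*P) = P*w*(P*u*P) = P * (w * (P*u*P)) = P * P = P
    have h1 : P * w * P * (P * u * P) = P * (w * (P * u * P)) := by
      rw [mul_assoc (P * w) P (P * u * P)]
      rw [← mul_assoc P (P * u) P, ← mul_assoc P P u, hPP]
      rw [mul_assoc P w _]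
    have hw' : w * (P * u * P) = P := hw
    rw [h1, hw', hPP]
  have hPid : ∀ g, (∃ u ∈ S, g = P * u * P) → P * g = g ∧ g * P = g := by
    rintro g ⟨u, huS, rfl⟩
    constructor
    · rw [← mul_assoc P (P*u) P, ← mul_assoc P P u, hPP]
    · rw [mul_assoc (P*u) P P, hPP]
  refine ⟨P, hPS, hPP, hGmemS, ?_⟩
  intro u huS
  set g := P * u * P with hg
  obtain ⟨q, hqG, hqg⟩ := hleft g ⟨u, huS, rfl⟩
  obtain ⟨k, hkG, hkq⟩ := hleft q hqG
  obtain ⟨w, hwS, hqw⟩ := hqG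
  have hqS : q ∈ S := by rw [hqw]; exact hGmemS w hwS
  have hqP := hPid q ⟨w, hwS, hqw⟩
  have hgP := hPid g ⟨u, huS, rfl⟩
  have hkP := hPid k hkG
  -- g * q = P : from k q = P : g = P g = (k q) g = k (q g) = k P = k, so g q = k q = P
  have hgk : g = k := by
    calc g = P * g := (hgP.1).symm
    _ = (k * q) * g := by rw [hkq]
    _ = k * (q * g) := mul_assoc _ _ _
    _ = k * P := by rw [hqg]
    _ = k := hkP.2
  refine ⟨q, hqS, hqP.2, hqP.1, hqg, ?_⟩
  rw [hgk, hkq]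

end Ideal

section Subgroup

variable {G : Set (E →WOT[ℂ] E)} {P : E →WOT[ℂ] E}

/-- Given a compact "group" `G` with identity `P`, and a countable family in `G`, there is a
compact separable closed subgroup of `G` containing the family. -/
lemma exists_subgroup (hGcomp : IsCompact G) (hGclosed : IsClosed G)
    (hGmul : ∀ a ∈ G, ∀ b ∈ G, a * b ∈ G)
    (hGP : ∀ a ∈ G, P * a = a ∧ a * P = a)
    (hGinv : ∀ a ∈ G, ∃ q ∈ G, q * a = P ∧ a * q = P)
    (g : ℕ → E →WOT[ℂ] E) (hg : ∀ k, g k ∈ G) :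
    ∃ Γ : Set (E →WOT[ℂ] E), Γ ⊆ G ∧ IsClosed Γ ∧ IsCompact Γ ∧ (∀ k, g k ∈ Γ) ∧ P ∈ Γ ∧
      (∀ a ∈ Γ, ∀ b ∈ Γ, a * b ∈ Γ) ∧ (∀ s ∈ Γ, ∃ q ∈ Γ, q * s = P ∧ s * q = P) ∧
      ∃ D : Set (E →WOT[ℂ] E), D.Countable ∧ D ⊆ Γ ∧ Γ ⊆ closure D := by
  classical
  set step : (E →WOT[ℂ] E) → ℕ → (E →WOT[ℂ] E) := fun a n => a * g n with hstep
  set D : Set (E →WOT[ℂ] E) :=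
    Set.range (fun p : ℕ × List ℕ => p.2.foldl step (g p.1)) with hD
  have hDcount : D.Countable := Set.countable_range _
  have hfoldl_mem : ∀ (l : List ℕ) (x : E →WOT[ℂ] E), x ∈ G → l.foldl step x ∈ G := by
    intro l
    induction l with
    | nil => exact fun x hx => hx
    | cons n l ih =>
      intro x hx
      exact ih _ (hGmul x hx (g n) (hg n))
  have hDG : D ⊆ G := by
    rintro _ ⟨⟨k, l⟩, rfl⟩
    exact hfoldl_mem l (g k) (hg k)
  have hfoldl_mul : ∀ (l : List ℕ) (x y : E →WOT[ℂ] E),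
      x * l.foldl step y = l.foldl step (x * y) := by
    intro l
    induction l with
    | nil => intro x y; rfl
    | cons n l ih =>
      intro x y
      show x * l.foldl step (step y n) = l.foldl step (step (x * y) n)
      rw [ih x (step y n)]
      have hx : x * step y n = step (x * y) n := (mul_assoc x y (g n)).symm
      rw [hx]
  have hDmul : ∀ a ∈ D, ∀ b ∈ D, a * b ∈ D := by
    rintro _ ⟨⟨k, l⟩, rfl⟩ _ ⟨⟨k', l'⟩, rfl⟩
    refine ⟨⟨k, (l ++ [k']) ++ l'⟩, ?_⟩
    show ((l ++ [k']) ++ l').foldl step (g k) = l.foldl step (g k) * l'.foldl step (g k')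
    rw [List.foldl_append, List.foldl_append]
    rw [hfoldl_mul l' (l.foldl step (g k)) (g k')]
    rfl
  set Γ : Set (E →WOT[ℂ] E) := closure D with hΓ
  have hΓG : Γ ⊆ G := closure_minimal hDG hGclosed
  have hΓclosed : IsClosed Γ := isClosed_closure
  have hΓcomp : IsCompact Γ := hGcomp.of_isClosed_subset hΓclosed hΓG
  have hgΓ : ∀ k, g k ∈ Γ := fun k => subset_closure ⟨⟨k, []⟩, rfl⟩
  have hΓmul : ∀ a ∈ Γ, ∀ b ∈ Γ, a * b ∈ Γ := closure_mul_mem hDmul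
  have hΓinv : ∀ s ∈ Γ, ∃ q ∈ Γ, q * s = P ∧ s * q = P ∧ P ∈ Γ := by
    intro s hs
    set pw : ℕ → (E →WOT[ℂ] E) := fun n => Nat.rec s (fun _ a => s * a) n with hpw
    have hpw0 : pw 0 = s := rfl
    have hpwsucc : ∀ n, pw (n + 1) = s * pw n := fun n => rfl
    have hpwΓ : ∀ n, pw n ∈ Γ := by
      intro n
      induction n with
      | zero => exact hs
      | succ n ih => rw [hpwsucc]; exact hΓmul s hs _ ih
    have hpwG : ∀ n, pw n ∈ G := fun n => hΓG (hpwΓ n)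
    have hpw_add : ∀ n m, pw n * pw m = pw (n + m + 1) := by
      intro n
      induction n with
      | zero =>
        intro m
        have h0 : 0 + m + 1 = m + 1 := by omega
        rw [hpw0, h0, hpwsucc]
      | succ n ih =>
        intro m
        have h0 : n + 1 + m + 1 = (n + m + 1) + 1 := by omega
        rw [hpwsucc, mul_assoc, ih m, h0, hpwsucc]
    set C : ℕ → Set (E →WOT[ℂ] E) := fun N => closure {A | ∃ n, N ≤ n ∧ A = pw n} with hC
    have hCΓ : ∀ N, C N ⊆ Γ := by
      intro N
      apply closure_minimal _ hΓclosed
      rintro _ ⟨n, -, rfl⟩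
      exact hpwΓ n
    have hCne : ∀ N, (C N).Nonempty := fun N => ⟨pw N, subset_closure ⟨N, le_rfl, rfl⟩⟩
    have hCcl : ∀ N, IsClosed (C N) := fun N => isClosed_closure
    have hCcomp : ∀ N, IsCompact (C N) := fun N =>
      hΓcomp.of_isClosed_subset (hCcl N) (hCΓ N)
    have hCanti : ∀ N M : ℕ, N ≤ M → C M ⊆ C N := by
      intro N M hNM
      apply closure_mono
      rintro _ ⟨n, hn, rfl⟩
      exact ⟨n, hNM.trans hn, rfl⟩
    have hAne : (⋂ N, C N).Nonempty := by
      apply IsCompact.nonempty_iInter_of_directed_nonempty_isCompact_isClosed C ?_ hCne hCcomp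
        hCcl
      intro i j
      exact ⟨max i j, hCanti i _ (le_max_left _ _), hCanti j _ (le_max_right _ _)⟩
    have hAmul : ∀ a ∈ (⋂ N, C N), ∀ b ∈ (⋂ N, C N), a * b ∈ (⋂ N, C N) := by
      intro a ha b hb
      rw [Set.mem_iInter] at ha hb ⊢
      intro N
      have h1 : ∀ n, pw n * b ∈ C (N + 1) := by
        intro n
        have himg := image_closure_subset_closure_image
          (s := {A | ∃ m, N ≤ m ∧ A = pw m}) (continuous_mul_left' (pw n))
        have hmem : pw n * b ∈ (pw n * ·) '' closure {A | ∃ m, N ≤ m ∧ A = pw m} :=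
          ⟨b, hb N, rfl⟩
        have hsub : (pw n * ·) '' {A | ∃ m, N ≤ m ∧ A = pw m} ⊆
            {A | ∃ m, N + 1 ≤ m ∧ A = pw m} := by
          rintro _ ⟨_, ⟨m, hm, rfl⟩, rfl⟩
          refine ⟨n + m + 1, by omega, ?_⟩
          show pw n * pw m = pw (n + m + 1)
          exact hpw_add n m
        exact closure_mono hsub (himg hmem)
      have himg2 := image_closure_subset_closure_image
        (s := {A | ∃ m, 0 ≤ m ∧ A = pw m}) (continuous_mul_right' b)
      have hmem2 : a * b ∈ (· * b) '' closure {A | ∃ m, 0 ≤ m ∧ A = pw m} :=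
        ⟨a, ha 0, rfl⟩
      have hsub2 : (· * b) '' {A | ∃ m, 0 ≤ m ∧ A = pw m} ⊆ C (N + 1) := by
        rintro _ ⟨_, ⟨m, -, rfl⟩, rfl⟩
        exact h1 m
      have : a * b ∈ closure (C (N + 1)) := closure_mono hsub2 (himg2 hmem2)
      rw [(hCcl (N + 1)).closure_eq] at this
      exact hCanti N (N + 1) (by omega) this
    have hAcomp : IsCompact (⋂ N, C N) :=
      (hCcomp 0).of_isClosed_subset (isClosed_iInter hCcl) (Set.iInter_subset _ 0)
    obtain ⟨f, hfA, hff⟩ := exists_idempotent_in_compact_subsemigroup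
      (fun r => continuous_mul_right' r) _ hAne hAcomp hAmul
    have hfG : f ∈ G := hΓG (hCΓ 0 (Set.mem_iInter.mp hfA 0))
    have hfP : f = P := by
      obtain ⟨q0, hq0G, hq0f, -⟩ := hGinv f hfG
      calc f = P * f := ((hGP f hfG).1).symm
        _ = (q0 * f) * f := by rw [hq0f]
        _ = q0 * (f * f) := mul_assoc _ _ _
        _ = q0 * f := by rw [hff]
        _ = P := hq0f
    have hP1 : P ∈ C 1 := by
      rw [← hfP]
      exact Set.mem_iInter.mp hfA 1
    obtain ⟨q, hqG, hqs, hsq⟩ := hGinv s (hΓG hs)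
    have hqΓ : q ∈ Γ := by
      have hqP : q * P = q := (hGP q hqG).2
      have himg := image_closure_subset_closure_image
        (s := {A | ∃ m, 1 ≤ m ∧ A = pw m}) (continuous_mul_left' q)
      have hmem : q * P ∈ (q * ·) '' closure {A | ∃ m, 1 ≤ m ∧ A = pw m} := ⟨P, hP1, rfl⟩
      have hsub : (q * ·) '' {A | ∃ m, 1 ≤ m ∧ A = pw m} ⊆ Γ := by
        rintro _ ⟨_, ⟨m, hm, rfl⟩, rfl⟩
        obtain ⟨m', rfl⟩ : ∃ m', m = m' + 1 := ⟨m - 1, by omega⟩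
        have heq : q * pw (m' + 1) = pw m' := by
          rw [hpwsucc, ← mul_assoc, hqs]
          exact (hGP (pw m') (hpwG m')).1
        show q * pw (m' + 1) ∈ Γ
        rw [heq]
        exact hpwΓ m'
      have := closure_mono hsub (himg hmem)
      rw [hΓclosed.closure_eq] at this
      rwa [hqP] at this
    exact ⟨q, hqΓ, hqs, hsq, by rw [← hqs]; exact hΓmul q hqΓ s hs⟩
  have hPΓ : P ∈ Γ := by
    obtain ⟨q, hqΓ, hqs, hsq, hPΓ⟩ := hΓinv (g 0) (hgΓ 0)
    exact hPΓ
  exact ⟨Γ, hΓG, hΓclosed, hΓcomp, hgΓ, hPΓ,  hΓmul,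
    fun s hs => (hΓinv s hs).imp (fun q hq => ⟨hq.1, hq.2.1, hq.2.2.1⟩),
    D, hDcount, subset_closure, subset_rfl⟩

end Subgroup

/-- Hahn-Banach: a functional vanishing on a closed subspace, nonzero at a point outside. -/
lemma mazur_functional (Y : Submodule ℂ E) (hY : IsClosed (Y : Set E)) {x : E} (hx : x ∉ Y) :
    ∃ φ : E →L[ℂ] ℂ, (∀ y ∈ Y, φ y = 0) ∧ φ x ≠ 0 := by
  haveI : IsClosed (Y : Set E) := hY
  set Q := E ⧸ Y
  have hxQ : (Submodule.Quotient.mk x : Q) ≠ 0 := by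
    simpa [Submodule.Quotient.mk_eq_zero] using hx
  obtain ⟨ψ, hψn, hψx⟩ := exists_dual_vector ℂ (Submodule.Quotient.mk x : Q) (norm_ne_zero_iff.mpr hxQ)
  let mkC : E →L[ℂ] Q := ⟨Y.mkQ, by
    apply AddMonoidHomClass.continuous_of_bound Y.mkQ 1
    intro z
    simpa using Submodule.Quotient.norm_mk_le Y z⟩
  refine ⟨ψ.comp mkC, fun y hy => ?_, ?_⟩
  · have : (Submodule.Quotient.mk y : Q) = 0 := (Submodule.Quotient.mk_eq_zero Y).mpr hy
    simp only [ContinuousLinearMap.comp_apply]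
    show ψ (Submodule.Quotient.mk y) = 0
    rw [this, map_zero]
  · show ψ (Submodule.Quotient.mk x) ≠ 0
    rw [hψx]
    simpa [norm_eq_zero] using hxQ

def cq (q : ℚ × ℚ) : ℂ := (q.1 : ℂ) + (q.2 : ℂ) * Complex.I

lemma cq_dense (c : ℂ) {δ : ℝ} (hδ : 0 < δ) : ∃ q : ℚ × ℚ, ‖c - cq q‖ < δ := by
  obtain ⟨q1, hq1⟩ := exists_rat_near c.re (by positivity : (0:ℝ) < δ/2)
  obtain ⟨q2, hq2⟩ := exists_rat_near c.im (by positivity : (0:ℝ) < δ/2)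
  refine ⟨(q1, q2), ?_⟩
  have h1 : (c - cq (q1, q2)).re = c.re - q1 := by simp [cq]
  have h2 : (c - cq (q1, q2)).im = c.im - q2 := by simp [cq]
  calc ‖c - cq (q1, q2)‖ ≤ |(c - cq (q1, q2)).re| + |(c - cq (q1, q2)).im| :=
        Complex.norm_le_abs_re_add_abs_im _
    _ < δ := by
        rw [h1, h2]
        linarith

lemma cq_mul (q q' : ℚ × ℚ) :
    cq q * cq q' = cq (q.1 * q'.1 - q.2 * q'.2, q.1 * q'.2 + q.2 * q'.1) := by
  simp only [cq]
  push_cast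
  ring_nf
  rw [Complex.I_sq]
  ring

lemma cq_one : cq (1, 0) = 1 := by simp [cq]

/-- The ℂ-span of a countable family is contained in the closure of the countable set of
rational combinations. -/
lemma span_subset_closure_rat (e : ℕ → E) :
    ∃ R : Set E, R.Countable ∧
      (Submodule.span ℂ (Set.range e) : Set E) ⊆ closure R := by
  classical
  set R : Set E :=
    Set.range (fun p : List ((ℚ × ℚ) × ℕ) => (p.map fun t => cq t.1 • e t.2).sum) with hR
  have hzero : (0 : E) ∈ R := ⟨[], rfl⟩
  have hadd : ∀ a ∈ R, ∀ b ∈ R, a + b ∈ R := by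
    rintro _ ⟨p, rfl⟩ _ ⟨p', rfl⟩
    exact ⟨p ++ p', by simp⟩
  have hqsmul : ∀ (q : ℚ × ℚ), ∀ a ∈ R, cq q • a ∈ R := by
    rintro q _ ⟨p, rfl⟩
    have key : ∀ p : List ((ℚ × ℚ) × ℕ), ∃ p' : List ((ℚ × ℚ) × ℕ),
        (p'.map fun t => cq t.1 • e t.2).sum = cq q • (p.map fun t => cq t.1 • e t.2).sum := by
      intro p
      induction p with
      | nil => exact ⟨[], by simp⟩
      | cons t p ih =>
        obtain ⟨p', hp'⟩ := ih
        refine ⟨((q.1 * t.1.1 - q.2 * t.1.2, q.1 * t.1.2 + q.2 * t.1.1), t.2) :: p', ?_⟩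
        simp only [List.map_cons, List.sum_cons, hp', smul_add, smul_smul, ← cq_mul]
    obtain ⟨p', hp'⟩ := key p
    exact ⟨p', hp'⟩
  refine ⟨R, Set.countable_range _, ?_⟩
  intro x hx
  induction hx using Submodule.span_induction with
  | mem x hxe =>
    obtain ⟨n, rfl⟩ := hxe
    apply subset_closure
    exact ⟨[((1, 0), n)], by simp [cq_one]⟩
  | zero => exact subset_closure hzero
  | add x y hx hy ihx ihy =>
    exact map_mem_closure₂ continuous_add ihx ihy hadd
  | smul c x hx ih =>
    rcases mem_closure_iff_seq_limit.mp ih with ⟨r, hrR, hrx⟩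
    have hqsn : ∀ n : ℕ, ∃ qn : ℚ × ℚ, ‖c - cq qn‖ < 1 / (n + 1) := by
      intro n
      exact cq_dense c (by positivity)
    choose qs hqs using hqsn
    have hq : Tendsto (fun n => cq (qs n)) atTop (𝓝 c) := by
      have hd : ∀ n : ℕ, dist (cq (qs n)) c ≤ 1 / (n + 1) := fun n =>
        le_of_lt (by rw [dist_comm, dist_eq_norm]; exact hqs n)
      rw [tendsto_iff_dist_tendsto_zero]
      exact squeeze_zero (fun n => dist_nonneg) hd tendsto_one_div_add_atTop_nhds_zero_nat
    have hlim : Tendsto (fun n => cq (qs n) • r n) atTop (𝓝 (c • x)) := hq.smul hrx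
    exact mem_closure_of_tendsto hlim (Eventually.of_forall fun n => hqsmul (qs n) (r n) (hrR n))


section Baire

variable {Γ : Set (E →WOT[ℂ] E)} {P : E →WOT[ℂ] E}

lemma totallyBounded_orbit
    (hΓcomp : IsCompact Γ) (hPΓ : P ∈ Γ)
    (hΓmul : ∀ a ∈ Γ, ∀ b ∈ Γ, a * b ∈ Γ)
    (hΓP : ∀ a ∈ Γ, P * a = a ∧ a * P = a)
    (hΓinv : ∀ s ∈ Γ, ∃ q ∈ Γ, q * s = P ∧ s * q = P)
    (ξ : E) {M : ℝ} (hM0 : 0 < M) (hM : ∀ A ∈ Γ, ∀ z : E, ‖A z‖ ≤ M * ‖z‖)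
    {Rv : Set E} (hRvc : Rv.Countable) (hRvne : Rv.Nonempty)
    (hsep : ∀ A ∈ Γ, A ξ ∈ closure Rv) :
    TotallyBounded ((fun A : E →WOT[ℂ] E => A ξ) '' Γ) := by
  classical
  rw [Metric.totallyBounded_iff]
  intro ε hε
  set r : ℝ := ε / (4 * (M + 1)) with hr
  have hr0 : 0 < r := by positivity
  obtain ⟨en, hen⟩ := Set.Countable.exists_eq_range hRvc hRvne
  haveI : CompactSpace ↥Γ := isCompact_iff_compactSpace.mp hΓcomp
  haveI : Nonempty ↥Γ := ⟨⟨P, hPΓ⟩⟩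
  set Fd : ℕ → Set ↥Γ := fun n =>
    {A : ↥Γ | ∀ φ : E →L[ℂ] ℂ, ‖φ‖ ≤ 1 → ‖φ ((A : E →WOT[ℂ] E) ξ) - φ (en n)‖ ≤ r} with hFd
  have hFd_closed : ∀ n, IsClosed (Fd n) := by
    intro n
    have heq : Fd n = ⋂ (φ : E →L[ℂ] ℂ) (_ : ‖φ‖ ≤ 1),
        {A : ↥Γ | ‖φ ((A : E →WOT[ℂ] E) ξ) - φ (en n)‖ ≤ r} := by
      ext A
      simp only [hFd, Set.mem_setOf_eq, Set.mem_iInter]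
    rw [heq]
    refine isClosed_iInter fun φ => isClosed_iInter fun hφ => ?_
    have hc : Continuous fun A : ↥Γ => ‖φ ((A : E →WOT[ℂ] E) ξ) - φ (en n)‖ :=
      (((ContinuousLinearMapWOT.continuous_dual_apply ξ φ).comp
        continuous_subtype_val).sub continuous_const).norm
    exact isClosed_le hc continuous_const
  have hFd_mem : ∀ n (A : ↥Γ), A ∈ Fd n ↔ ‖(A : E →WOT[ℂ] E) ξ - en n‖ ≤ r := by
    intro n A
    constructor
    · intro h
      by_contra hgt
      push_neg at hgt
      have hne : (A : E →WOT[ℂ] E) ξ - en n ≠ 0 := by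
        intro h0
        rw [h0, norm_zero] at hgt
        exact absurd hgt (not_lt.mpr hr0.le)
      obtain ⟨φ, hφ1, hφeq⟩ := exists_dual_vector ℂ _ (norm_ne_zero_iff.mpr hne)
      have hb := h φ (le_of_eq hφ1)
      rw [← map_sub φ, hφeq] at hb
      rw [RCLike.norm_ofReal, abs_norm] at hb
      exact absurd hb (not_le.mpr hgt)
    · intro h φ hφ
      calc ‖φ ((A : E →WOT[ℂ] E) ξ) - φ (en n)‖
          = ‖φ ((A : E →WOT[ℂ] E) ξ - en n)‖ := by rw [map_sub]
        _ ≤ ‖φ‖ * ‖(A : E →WOT[ℂ] E) ξ - en n‖ := φ.le_opNorm _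
        _ ≤ 1 * r := mul_le_mul hφ h (norm_nonneg _) zero_le_one
        _ = r := one_mul r
  have hcover : ⋃ n, Fd n = Set.univ := by
    ext A
    simp only [Set.mem_iUnion, Set.mem_univ, iff_true]
    have hsA := hsep A.1 A.2
    rw [hen] at hsA
    obtain ⟨d, hd, hdist⟩ := Metric.mem_closure_iff.mp hsA r hr0
    obtain ⟨n, rfl⟩ := hd
    exact ⟨n, (hFd_mem n A).mpr (by rw [← dist_eq_norm]; exact hdist.le)⟩
  obtain ⟨n₀, hint⟩ := nonempty_interior_of_iUnion_of_closed hFd_closed hcover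
  obtain ⟨A₀, hA₀⟩ := hint
  have hchoice := fun B : ↥Γ => hΓinv B.1 B.2
  choose inv hinvΓ hinv1 hinv2 using hchoice
  set U : Set ↥Γ := interior (Fd n₀) with hU
  have hUopen : IsOpen U := isOpen_interior
  have hUsub : U ⊆ Fd n₀ := interior_subset
  -- translations
  let τ : ∀ w : E →WOT[ℂ] E, w ∈ Γ → ↥Γ → ↥Γ :=
    fun w hw A => ⟨w * A.1, hΓmul w hw A.1 A.2⟩
  have τcont : ∀ (w : E →WOT[ℂ] E) (hw : w ∈ Γ), Continuous (τ w hw) := fun w hw =>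
    Continuous.subtype_mk ((continuous_mul_left' w).comp continuous_subtype_val) _
  have τopen : ∀ h : ↥Γ, IsOpenMap (τ h.1 h.2) := by
    intro h
    apply IsOpenMap.of_inverse (τcont (inv h) (hinvΓ h))
    · intro A
      apply Subtype.ext
      show h.1 * (inv h * A.1) = A.1
      rw [← mul_assoc, hinv2 h]
      exact (hΓP A.1 A.2).1
    · intro A
      apply Subtype.ext
      show inv h * (h.1 * A.1) = A.1
      rw [← mul_assoc, hinv1 h]
      exact (hΓP A.1 A.2).1
  set hB : ↥Γ → ↥Γ := fun B => ⟨B.1 * inv A₀, hΓmul B.1 B.2 (inv A₀) (hinvΓ A₀)⟩ with hhB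
  set V : ↥Γ → Set ↥Γ := fun B => τ (hB B).1 (hB B).2 '' U with hV
  have hVopen : ∀ B, IsOpen (V B) := fun B => τopen (hB B) U hUopen
  have hτA₀ : ∀ B : ↥Γ, τ (hB B).1 (hB B).2 A₀ = B := by
    intro B
    apply Subtype.ext
    show (B.1 * inv A₀) * A₀.1 = B.1
    rw [mul_assoc, hinv1 A₀]
    exact (hΓP B.1 B.2).2
  have hcov2 : Set.univ ⊆ ⋃ B : ↥Γ, V B := by
    intro B _
    exact Set.mem_iUnion.mpr ⟨B, ⟨A₀, hA₀, hτA₀ B⟩⟩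
  obtain ⟨t, ht⟩ := isCompact_univ.elim_finite_subcover V hVopen hcov2
  -- the finite ε-net
  refine ⟨(fun B : ↥Γ => (B : E →WOT[ℂ] E) ξ) '' ↑t, (t.finite_toSet.image _), ?_⟩
  rintro _ ⟨A, hAΓ, rfl⟩
  obtain ⟨B, hBt, hABV⟩ := Set.mem_iUnion₂.mp (ht (Set.mem_univ (⟨A, hAΓ⟩ : ↥Γ)))
  obtain ⟨A', hA'U, hA'eq⟩ := hABV
  rw [Set.mem_iUnion₂]
  refine ⟨(B : E →WOT[ℂ] E) ξ, ⟨B, hBt, rfl⟩, ?_⟩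
  -- both A and B are translates by hB B of elements of U ⊆ Fd n₀
  have hAeq : A = (hB B).1 * A'.1 := by
    have := congrArg Subtype.val hA'eq
    exact this.symm
  have hBeq : (B : E →WOT[ℂ] E) = (hB B).1 * A₀.1 := by
    have := congrArg Subtype.val (hτA₀ B)
    exact this.symm
  have hdiff : A ξ - (B : E →WOT[ℂ] E) ξ = (hB B).1 ((A'.1 : E →WOT[ℂ] E) ξ - (A₀.1 : E →WOT[ℂ] E) ξ) := by
    have e1 : ((hB B).1 * A'.1) ξ = (hB B).1 (A'.1 ξ) := mul_apply _ _ ξ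
    have e2 : ((hB B).1 * A₀.1) ξ = (hB B).1 (A₀.1 ξ) := mul_apply _ _ ξ
    rw [hAeq, hBeq, e1, e2, map_sub]
  have hA'r : ‖(A'.1 : E →WOT[ℂ] E) ξ - en n₀‖ ≤ r := (hFd_mem n₀ A').mp (hUsub hA'U)
  have hA₀r : ‖(A₀.1 : E →WOT[ℂ] E) ξ - en n₀‖ ≤ r := (hFd_mem n₀ A₀).mp (hUsub hA₀)
  have h2r : ‖(A'.1 : E →WOT[ℂ] E) ξ - (A₀.1 : E →WOT[ℂ] E) ξ‖ ≤ 2 * r := by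
    have := norm_sub_le_norm_sub_add_norm_sub ((A'.1 : E →WOT[ℂ] E) ξ) (en n₀)
      ((A₀.1 : E →WOT[ℂ] E) ξ)
    calc ‖(A'.1 : E →WOT[ℂ] E) ξ - (A₀.1 : E →WOT[ℂ] E) ξ‖ ≤
        ‖(A'.1 : E →WOT[ℂ] E) ξ - en n₀‖ + ‖en n₀ - (A₀.1 : E →WOT[ℂ] E) ξ‖ := this
      _ ≤ r + r := add_le_add hA'r (by rw [norm_sub_rev]; exact hA₀r)
      _ = 2 * r := by ring
  have hfin : ‖A ξ - (B : E →WOT[ℂ] E) ξ‖ < ε := by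
    rw [hdiff]
    calc ‖(hB B).1 ((A'.1 : E →WOT[ℂ] E) ξ - (A₀.1 : E →WOT[ℂ] E) ξ)‖
        ≤ M * ‖(A'.1 : E →WOT[ℂ] E) ξ - (A₀.1 : E →WOT[ℂ] E) ξ‖ :=
          hM (hB B).1 (hB B).2 _
      _ ≤ M * (2 * r) := by
          apply mul_le_mul_of_nonneg_left h2r hM0.le
      _ < ε := by
          rw [hr]
          rw [show M * (2 * (ε / (4 * (M + 1)))) = (M * ε * 2) / (4 * (M + 1)) by ring]
          rw [div_lt_iff₀ (by positivity : (0:ℝ) < 4 * (M + 1))]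
          nlinarith
  rw [Metric.mem_ball, dist_eq_norm]
  exact hfin

end Baire

/-- A set containing an `ε`-separated sequence is not totally bounded. -/
lemma not_totallyBounded_of_separated {S : Set E} {ε : ℝ} (hε : 0 < ε) (x : ℕ → E)
    (hx : ∀ n, x n ∈ S) (hsep : ∀ m n : ℕ, m ≠ n → ε ≤ ‖x m - x n‖) :
    ¬ TotallyBounded S := by
  intro h
  rw [Metric.totallyBounded_iff] at h
  obtain ⟨t, htf, hcov⟩ := h (ε / 2) (by positivity)
  have hc : ∀ n, ∃ c ∈ t, x n ∈ Metric.ball c (ε / 2) := fun n => by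
    have := hcov (hx n)
    obtain ⟨i, hi, hb⟩ := Set.mem_iUnion₂.mp this
    exact ⟨i, hi, hb⟩
  choose c hct hcb using hc
  haveI : Finite ↥t := htf.to_subtype
  obtain ⟨m, n, hmn, hceq⟩ :=
    Finite.exists_ne_map_eq_of_infinite (fun n => (⟨c n, hct n⟩ : ↥t))
  have hceq' : c m = c n := congrArg Subtype.val hceq
  have h1 := Metric.mem_ball.mp (hcb m)
  have h2 := Metric.mem_ball.mp (hcb n)
  rw [hceq'] at h1
  have hlt : ‖x m - x n‖ < ε := by
    rw [← dist_eq_norm]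
    have h3 := dist_triangle (x m) (c n) (x n)
    have h4 : dist (c n) (x n) < ε / 2 := by rw [dist_comm]; exact h2
    linarith
  exact absurd (hsep m n hmn) (not_le.mpr hlt)

end JP

open JP

/-- **Theorem 3.1** (cf. [OTAoET, Prop. 16.29]).  Let `T` be a JdLG-admissible semigroup of
bounded operators on a complex Banach space `E`.  If `inf_{u ∈ T} ‖u y‖ > 0` for every
`y ≠ 0` whose orbit `T y` is relatively norm-compact, then the reversible part consists
exactly of the vectors with relatively norm-compact orbit. -/
theorem rev_eq_relatively_compact_orbits
    {E : Type*} [NormedAddCommGroup E] [NormedSpace ℂ E] [CompleteSpace E]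
    (T : Set (E →L[ℂ] E)) (hsemi : ∀ a ∈ T, ∀ b ∈ T, a.comp b ∈ T)
    (hadm : JdLG.Admissible E T)
    (hinf : ∀ y : E, y ≠ 0 → IsCompact (closure ((fun u : E →L[ℂ] E => u y) '' T)) →
      0 < ⨅ u : T, ‖(u : E →L[ℂ] E) y‖) :
    JdLG.rev E T = {ξ : E | IsCompact (closure ((fun u : E →L[ℂ] E => u ξ) '' T))} := by
  classical
  rcases T.eq_empty_or_nonempty with rfl | hTne
  · -- trivial case `T = ∅`
    ext ξ
    simp only [Set.mem_setOf_eq]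
    constructor
    · intro _
      simp
    · intro _ u hu
      exfalso
      have : u ∈ (ContinuousLinearMapWOT.ofCLM : (E →L[ℂ] E) → (E →WOT[ℂ] E)) ⁻¹'
          closure ((ContinuousLinearMapWOT.ofCLM : (E →L[ℂ] E) → (E →WOT[ℂ] E)) '' (∅ : Set (E →L[ℂ] E))) := hu
      simpa using this
  -- main case
  set Sc : Set (E →WOT[ℂ] E) := closure ((jj E) '' T) with hScdef
  have hwot : ∀ u : E →L[ℂ] E, u ∈ JdLG.wotClosure E T ↔ jj E u ∈ Sc := fun u => Iff.rfl
  have hScomp : IsCompact Sc := hadm.1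
  have hSclosed : IsClosed Sc := isClosed_closure
  have hSne : Sc.Nonempty := (hTne.image _).closure
  have hTsub : ∀ t ∈ T, jj E t ∈ Sc := fun t ht => subset_closure ⟨t, ht, rfl⟩
  have hSmul : ∀ a ∈ Sc, ∀ b ∈ Sc, a * b ∈ Sc := by
    apply closure_mul_mem
    rintro _ ⟨t1, ht1, rfl⟩ _ ⟨t2, ht2, rfl⟩
    rw [← jj_mul]
    exact ⟨t1.comp t2, hsemi t1 ht1 t2 ht2, rfl⟩
  obtain ⟨M, hM1, hMb⟩ := norm_bound hScomp
  have hM0 : (0:ℝ) < M := lt_of_lt_of_le one_pos hM1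
  have hMb' : ∀ A ∈ Sc, ∀ z : E, ‖A z‖ ≤ M * ‖z‖ := by
    intro A hA z
    calc ‖A z‖ = ‖((jj E).symm A) z‖ := rfl
      _ ≤ ‖(jj E).symm A‖ * ‖z‖ := ((jj E).symm A).le_opNorm z
      _ ≤ M * ‖z‖ := mul_le_mul_of_nonneg_right (hMb A hA) (norm_nonneg z)
  -- ################ direction 2: compact orbit → reversible ################
  have dir2 : ∀ ξ : E, IsCompact (closure ((fun u : E →L[ℂ] E => u ξ) '' T)) →
      ξ ∈ JdLG.rev E T := by
    intro ξ hC
    obtain ⟨⟨rr, aa⟩, ⟨hr, ha, hsum⟩, -⟩ := hadm.2 ξ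
    simp only at hr ha hsum
    obtain ⟨u, huW, hua⟩ := ha
    have huS : jj E u ∈ Sc := (hwot u).mp huW
    -- the orbit of `η := u ξ` is contained in the orbit closure of `ξ`
    have hηorb : ∀ s ∈ T, s (u ξ) ∈ closure ((fun t : E →L[ℂ] E => t ξ) '' T) := by
      intro s hs
      have hsu : jj E (s.comp u) ∈ Sc := by
        rw [jj_mul]; exact hSmul _ (hTsub s hs) _ huS
      have := apply_mem_orbit_closure hsu hC
      exact this
    have hηC : IsCompact (closure ((fun t : E →L[ℂ] E => t (u ξ)) '' T)) := by
      apply hC.of_isClosed_subset isClosed_closure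
      apply closure_minimal _ isClosed_closure
      rintro _ ⟨s, hs, rfl⟩
      exact hηorb s hs
    -- rr = v (u ξ)
    obtain ⟨v, hvW, hv⟩ := hr u huW
    have hvS : jj E v ∈ Sc := (hwot v).mp hvW
    have hurr : u ξ = u rr := by
      have : u ξ = u (rr + aa) := by rw [hsum]
      rw [this, map_add, hua, add_zero]
    have hrv : v (u ξ) = rr := by rw [hurr, hv]
    -- orbit of rr
    have hrrorb : ∀ s ∈ T, s rr ∈ closure ((fun t : E →L[ℂ] E => t (u ξ)) '' T) := by
      intro s hs
      have hsv : jj E (s.comp v) ∈ Sc := by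
        rw [jj_mul]; exact hSmul _ (hTsub s hs) _ hvS
      have := apply_mem_orbit_closure hsv hηC
      rw [show (jj E (s.comp v)) (u ξ) = s (v (u ξ)) from rfl, hrv] at this
      exact this
    have hrrC : IsCompact (closure ((fun t : E →L[ℂ] E => t rr) '' T)) := by
      apply hηC.of_isClosed_subset isClosed_closure
      apply closure_minimal _ isClosed_closure
      rintro _ ⟨s, hs, rfl⟩
      exact hrrorb s hs
    -- orbit of aa
    have haaC : IsCompact (closure ((fun t : E →L[ℂ] E => t aa) '' T)) := by
      set K0 := closure ((fun t : E →L[ℂ] E => t ξ) '' T)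
      set K1 := closure ((fun t : E →L[ℂ] E => t rr) '' T)
      have hKcomp : IsCompact ((fun p : E × E => p.1 - p.2) '' (K0 ×ˢ K1)) :=
        (hC.prod hrrC).image (continuous_fst.sub continuous_snd)
      apply hKcomp.of_isClosed_subset isClosed_closure
      apply closure_minimal _ hKcomp.isClosed
      rintro _ ⟨s, hs, rfl⟩
      refine ⟨(s ξ, s rr), Set.mk_mem_prod (subset_closure ⟨s, hs, rfl⟩)
        (subset_closure ⟨s, hs, rfl⟩), ?_⟩
      show s ξ - s rr = s aa
      have : s ξ = s rr + s aa := by rw [← map_add, hsum]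
      rw [this]; abel
    -- aa = 0
    have haz : aa = 0 := by
      by_contra hne
      have hpos := hinf aa hne haaC
      have h0 : (0:E) ∈ closure ((fun t : E →L[ℂ] E => t aa) '' T) := by
        have := apply_mem_orbit_closure huS haaC
        rwa [show (jj E u) aa = u aa from rfl, hua] at this
      obtain ⟨z, hz, hdz⟩ := Metric.mem_closure_iff.mp h0 _ hpos
      obtain ⟨s, hs, rfl⟩ := hz
      have hle : (⨅ w : T, ‖(w : E →L[ℂ] E) aa‖) ≤ ‖s aa‖ := by
        apply ciInf_le ⟨0, by rintro _ ⟨w, rfl⟩; exact norm_nonneg _⟩ (⟨s, hs⟩ : T)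
      rw [dist_eq_norm, zero_sub, norm_neg] at hdz
      linarith
    rw [haz, add_zero] at hsum
    rw [← hsum]
    exact hr
  -- ################ direction 1: reversible → compact orbit ################
  have dir1 : ∀ ξ ∈ JdLG.rev E T, IsCompact (closure ((fun u : E →L[ℂ] E => u ξ) '' T)) := by
    intro ξ hξ
    obtain ⟨P, hPS, hPP, hGmemS, hGinv'⟩ := exists_P_and_G hScomp hSclosed hSne hSmul
    set Pc : E →L[ℂ] E := (jj E).symm P with hPcdef
    have hPcW : Pc ∈ JdLG.wotClosure E T := by
      rw [hwot]
      simpa only [hPcdef, LinearEquiv.apply_symm_apply] using hPS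
    have hPapp : ∀ z : E, P z = Pc z := fun z => rfl
    -- P ζ is reversible for every ζ
    have hPrev : ∀ ζ : E, Pc ζ ∈ JdLG.rev E T := by
      intro ζ u huw
      obtain ⟨q, hqS, hqP, hPq, hql, hqr⟩ := hGinv' (jj E u) ((hwot u).mp huw)
      refine ⟨(jj E).symm q, ?_, ?_⟩
      · rw [hwot]; simpa only [LinearEquiv.apply_symm_apply] using hqS
      · have hop : q * (jj E u * P) = P := by
          conv_lhs => rw [← hqP]
          rw [mul_assoc q P (jj E u * P), ← mul_assoc P (jj E u) P]
          exact hql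
        have happ : (q * (jj E u * P)) ζ = P ζ := by rw [hop]
        rw [JP.mul_apply, JP.mul_apply] at happ
        exact happ
    -- ζ - P ζ is almost weakly stable for every ζ
    have hPaws : ∀ ζ : E, ζ - Pc ζ ∈ JdLG.aws E T := by
      intro ζ
      refine ⟨Pc, hPcW, ?_⟩
      have hPP' : Pc.comp Pc = Pc := by
        have := congrArg (jj E).symm hPP
        rwa [symm_mul] at this
      have : Pc (Pc ζ) = Pc ζ := by
        conv_lhs => rw [show Pc (Pc ζ) = (Pc.comp Pc) ζ from rfl, hPP']
      rw [map_sub, this, sub_self]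
    -- every reversible vector is fixed by P
    have hfix : ∀ ζ ∈ JdLG.rev E T, Pc ζ = ζ := by
      intro ζ hζ
      obtain ⟨q0, -, huq⟩ := hadm.2 ζ
      have h1 : ((ζ, 0) : E × E) = q0 :=
        huq _ ⟨hζ, ⟨Pc, hPcW, map_zero _⟩, add_zero ζ⟩
      have h2 : ((Pc ζ, ζ - Pc ζ) : E × E) = q0 :=
        huq _ ⟨hPrev ζ, hPaws ζ, by rw [add_comm, sub_add_cancel]⟩
      have := h2.trans h1.symm
      exact congrArg Prod.fst this
    -- rev is invariant
    have hrev_inv : ∀ ζ ∈ JdLG.rev E T, ∀ w ∈ JdLG.wotClosure E T,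
        w ζ ∈ JdLG.rev E T := by
      intro ζ hζ w hw u hu
      have hcomp : (u.comp w) ∈ JdLG.wotClosure E T := by
        rw [hwot, jj_mul]
        exact hSmul _ ((hwot u).mp hu) _ ((hwot w).mp hw)
      obtain ⟨v, hvW, hv⟩ := hζ (u.comp w) hcomp
      refine ⟨w.comp v, ?_, ?_⟩
      · rw [hwot, jj_mul]
        exact hSmul _ ((hwot w).mp hw) _ ((hwot v).mp hvW)
      · show w (v (u (w ζ))) = w ζ
        exact congrArg w hv
    have hTW : ∀ t ∈ T, t ∈ JdLG.wotClosure E T := by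
      intro t ht
      rw [hwot]
      exact hTsub t ht
    -- each t ∈ T acts on ξ as the group element P (jj t) P
    have hfix_t : ∀ t ∈ T, ((jj E).symm (P * jj E t * P)) ξ = t ξ := by
      intro t ht
      have h1 : t ξ ∈ JdLG.rev E T := hrev_inv ξ hξ t (hTW t ht)
      have e1 : ((jj E).symm (P * jj E t * P)) ξ = Pc (t (Pc ξ)) := by
        rw [symm_mul, symm_mul]
        rfl
      rw [e1, hfix ξ hξ, hfix (t ξ) h1]
    -- suppose the orbit is not totally bounded
    have htb : TotallyBounded ((fun u : E →L[ℂ] E => u ξ) '' T) := by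
      by_contra htb
      obtain ⟨ε, hε, x, hxS, hsepx⟩ := exists_separated_seq htb
      have hxS' : ∀ n, ∃ t, t ∈ T ∧ t ξ = x n := by
        intro n
        obtain ⟨t, ht, hteq⟩ := hxS n
        exact ⟨t, ht, hteq⟩
      choose ts hts hxts using hxS'
      set g : ℕ → (E →WOT[ℂ] E) := fun k => P * jj E (ts k) * P with hgdef
      -- the group G = P Sc P
      set G : Set (E →WOT[ℂ] E) := (fun A => P * A * P) '' Sc with hGdef
      have hGcomp : IsCompact G :=
        hScomp.image ((continuous_mul_right' P).comp (continuous_mul_left' P))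
      have hGclosed : IsClosed G := hGcomp.isClosed
      have hGsub : G ⊆ Sc := by
        rintro _ ⟨A, hA, rfl⟩
        exact hSmul _ (hSmul _ hPS _ hA) _ hPS
      have hGP : ∀ a ∈ G, P * a = a ∧ a * P = a := by
        rintro _ ⟨A, hA, rfl⟩
        constructor
        · rw [← mul_assoc P (P * A) P, ← mul_assoc P P A, hPP]
        · rw [mul_assoc (P * A) P P, hPP]
      have hGmul : ∀ a ∈ G, ∀ b ∈ G, a * b ∈ G := by
        rintro _ ⟨A, hA, rfl⟩ _ ⟨B, hB, rfl⟩
        refine ⟨A * (P * (P * B)), hSmul _ hA _ (hSmul _ hPS _ (hSmul _ hPS _ hB)), ?_⟩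
        simp only [mul_assoc]
      have hGinv : ∀ a ∈ G, ∃ q ∈ G, q * a = P ∧ a * q = P := by
        rintro _ ⟨A, hA, rfl⟩
        obtain ⟨q, hqS, hqP, hPq, hql, hqr⟩ := hGinv' A hA
        refine ⟨q, ⟨q, hqS, ?_⟩, hql, hqr⟩
        show P * q * P = q
        rw [hPq, hqP]
      have hgG : ∀ k, g k ∈ G := fun k => ⟨jj E (ts k), hTsub _ (hts k), rfl⟩
      obtain ⟨Γ, hΓG, hΓclosed, hΓcomp, hgΓ, hPΓ, hΓmul, hΓinv, D, hDc, hDΓ, hΓD⟩ :=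
        exists_subgroup hGcomp hGclosed hGmul hGP hGinv g hgG
      -- separability of the Γ-orbit of ξ
      set Dv : Set E := (fun A : E →WOT[ℂ] E => A ξ) '' D with hDvdef
      have hDvc : Dv.Countable := hDc.image _
      have hDvne : Dv.Nonempty := by
        refine Set.Nonempty.image _ ?_
        rcases D.eq_empty_or_nonempty with hD0 | hD0
        · exfalso
          rw [hD0] at hΓD
          simpa using hΓD hPΓ
        · exact hD0
      obtain ⟨e, hDve⟩ := Set.Countable.exists_eq_range hDvc hDvne
      obtain ⟨R, hRc, hRspan⟩ := span_subset_closure_rat (E := E) e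
      have horbY : ∀ A ∈ Γ, A ξ ∈ closure R := by
        set Y : Submodule ℂ E := (Submodule.span ℂ (Set.range e)).topologicalClosure
          with hYdef
        have hYclosed : IsClosed (Y : Set E) :=
          Submodule.isClosed_topologicalClosure _
        have hYR : (Y : Set E) ⊆ closure R := by
          have hco : (Y : Set E) =
              closure ((Submodule.span ℂ (Set.range e) : Submodule ℂ E) : Set E) := rfl
          rw [hco]
          exact closure_minimal hRspan isClosed_closure
        have hZmem : ∀ A ∈ Γ, A ξ ∈ (Y : Set E) := by
          set Z : Set (E →WOT[ℂ] E) :=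
            {A | ∀ φ : E →L[ℂ] ℂ, (∀ y ∈ (Y : Set E), φ y = 0) → φ (A ξ) = 0} with hZdef
          have hZclosed : IsClosed Z := by
            have hZi : Z = ⋂ (φ : E →L[ℂ] ℂ) (_ : ∀ y ∈ (Y : Set E), φ y = 0),
                {A : E →WOT[ℂ] E | φ (A ξ) = 0} := by
              ext A
              simp only [hZdef, Set.mem_setOf_eq, Set.mem_iInter]
            rw [hZi]
            exact isClosed_iInter fun φ => isClosed_iInter fun _ =>
              isClosed_eq (ContinuousLinearMapWOT.continuous_dual_apply ξ φ)
                continuous_const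
          have hDZ : D ⊆ Z := by
            intro A hA φ hφ
            apply hφ
            have hmem : A ξ ∈ Dv := ⟨A, hA, rfl⟩
            rw [hDve] at hmem
            exact (Submodule.span ℂ (Set.range e)).le_topologicalClosure
              (Submodule.subset_span hmem)
          intro A hA
          have hAZ : A ∈ Z := closure_minimal hDZ hZclosed (hΓD hA)
          by_contra hnot
          obtain ⟨φ, hφY, hφA⟩ := mazur_functional Y hYclosed hnot
          exact hφA (hAZ φ hφY)
        exact fun A hA => hYR (hZmem A hA)
      have hRne : R.Nonempty := by
        rw [← closure_nonempty_iff]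
        exact ⟨e 0, hRspan (Submodule.subset_span ⟨0, rfl⟩)⟩
      -- the Γ-orbit of ξ is totally bounded
      have htb2 : TotallyBounded ((fun A : E →WOT[ℂ] E => A ξ) '' Γ) :=
        totallyBounded_orbit hΓcomp hPΓ hΓmul (fun a ha => hGP a (hΓG ha)) hΓinv ξ hM0
          (fun A hA z => hMb' A (hGsub (hΓG hA)) z) hRc hRne horbY
      -- but it contains the separated sequence: contradiction
      have hxin : ∀ k, x k ∈ (fun A : E →WOT[ℂ] E => A ξ) '' Γ := by
        intro k
        refine ⟨g k, hgΓ k, ?_⟩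
        show ((jj E).symm (g k)) ξ = x k
        rw [hgdef]
        rw [hfix_t (ts k) (hts k)]
        exact hxts k
      exact not_totallyBounded_of_separated hε x hxin hsepx htb2
    have h1 : TotallyBounded (closure ((fun u : E →L[ℂ] E => u ξ) '' T)) := htb.closure
    exact h1.isCompact_of_isClosed isClosed_closure
  ext ξ
  simp only [Set.mem_setOf_eq]
  exact ⟨fun h => dir1 ξ h, fun h => dir2 ξ h⟩

end
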